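/- arXiv:2102.04752 — 7 statements merged into one kernel-verified Lean document; each statement's English description precedes it below -/
import Mathlib

section
/- Let R be a valuation ring with fraction field K, let K' be an algebraic field extension of K, and let R₁ be a valuation subring of K' (so R₁ has fraction field K') that dominates R, meaning R ⊆ R₁ and the maximal ideal of R₁ contracts to the maximal ideal of R. Then the natural K-algebra homomorphism R₁ ⊗_R K → K' is an isomorphism; equivalently, K' is the localization of R₁ at the multiplicative set of nonzero elements of R. -/
/-!
Every `z ∈ K'` is algebraic over `R`, so some `a ≠ 0` in `R` makes `a z` integral over `R`, hence
over `R₁`; valuation rings are integrally closed, so `a z ∈ R₁`. Thus `K' = R₁[1/a : a ∈ R ∖ 0]`.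
Applied to `z = n⁻¹` for `n ≠ 0` in `R₁`, this says that `n` divides an element of `R ∖ 0`, so
localizing `R₁` at `R ∖ 0` is the same as localizing at all of `R₁ ∖ 0`, which gives `K'`.
-/

open scoped nonZeroDivisors

namespace ValuationSubring

variable {R L : Type*} [CommRing R] [Field L] [Algebra R L] (A : ValuationSubring L)
  [Algebra R A] [IsScalarTower R A L]

theorem mem_of_isIntegral {x : L} (hx : IsIntegral R x) : x ∈ A := by
  obtain ⟨y, rfl⟩ := IsIntegrallyClosed.isIntegral_iff.mp (hx.tower_top (A := A))
  exact y.2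

theorem exists_algebraMap_mul_mem_of_isAlgebraic {x : L} (hx : IsAlgebraic R x) :
    ∃ a ≠ (0 : R), algebraMap R L a * x ∈ A := by
  obtain ⟨a, ha, hint⟩ := hx.exists_integral_multiple
  exact ⟨a, ha, Algebra.smul_def a x ▸ A.mem_of_isIntegral hint⟩

theorem isLocalization_algebraMapSubmonoid_nonZeroDivisors [IsDomain R] [FaithfulSMul R L]
    [Algebra.IsAlgebraic R L] :
    IsLocalization (Algebra.algebraMapSubmonoid A R⁰) L := by
  have algebraMap_ne_zero {a : R} (ha : a ≠ 0) : algebraMap R A a ≠ 0 := fun h => by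
    apply ha
    simpa [← IsScalarTower.algebraMap_apply] using congrArg (algebraMap A L) h
  refine (IsLocalization.iff_of_le_of_exists_dvd _ A⁰ ?_ ?_).mpr inferInstance
  · rintro _ ⟨a, ha, rfl⟩
    exact mem_nonZeroDivisors_of_ne_zero (algebraMap_ne_zero (nonZeroDivisors.ne_zero ha))
  · intro n hn
    have hn' : (n : L) ≠ 0 := by exact_mod_cast nonZeroDivisors.ne_zero hn
    obtain ⟨a, ha, hmem⟩ := A.exists_algebraMap_mul_mem_of_isAlgebraic
      (Algebra.IsAlgebraic.isAlgebraic (R := R) (n : L)⁻¹)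
    refine ⟨_, ⟨a, mem_nonZeroDivisors_of_ne_zero ha, rfl⟩, ⟨_, hmem⟩, Subtype.ext ?_⟩
    change algebraMap A L (algebraMap R A a) = _
    rw [← IsScalarTower.algebraMap_apply, MulMemClass.coe_mul, mul_left_comm,
      mul_inv_cancel₀ hn', mul_one]

end ValuationSubring

theorem dominating_valuationSubring_isLocalization_general
    (R K K' : Type*) [CommRing R] [IsDomain R]
    [Field K] [Algebra R K] [IsFractionRing R K]
    [Field K'] [Algebra K K'] [Algebra.IsAlgebraic K K']
    [Algebra R K'] [IsScalarTower R K K']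
    (R₁ : ValuationSubring K')
    [Algebra R R₁] [IsScalarTower R R₁ K'] :
    IsLocalization (Algebra.algebraMapSubmonoid R₁ (nonZeroDivisors R)) K' := by
  have : Algebra.IsAlgebraic R K' := IsFractionRing.comap_isAlgebraic_iff (K := K).mpr ‹_›
  have : FaithfulSMul R K' := (faithfulSMul_iff_algebraMap_injective R K').mpr <| by
    rw [IsScalarTower.algebraMap_eq R K K']
    exact (algebraMap K K').injective.comp (IsFractionRing.injective R K)
  exact R₁.isLocalization_algebraMapSubmonoid_nonZeroDivisors

/-- Let `R` be a valuation ring with fraction field `K`, let `K'` be an algebraic field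
extension of `K`, and let `R₁` be a valuation subring of `K'` dominating `R` (i.e. the
inclusion `R → R₁` is a local homomorphism of local rings, compatibly with the inclusions
into `K'`). Then the natural `K`-algebra homomorphism `R₁ ⊗_R K → K'` is an isomorphism;
equivalently, `K'` is the localization of `R₁` at the multiplicative set of nonzero
elements of `R`. -/
theorem dominating_valuationSubring_isLocalization
    (R K K' : Type*) [CommRing R] [IsDomain R] [ValuationRing R]
    [Field K] [Algebra R K] [IsFractionRing R K]
    [Field K'] [Algebra K K'] [Algebra.IsAlgebraic K K']
    [Algebra R K'] [IsScalarTower R K K']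
    (R₁ : ValuationSubring K')
    [Algebra R R₁] [IsScalarTower R R₁ K']
    (hdom : IsLocalHom (algebraMap R R₁)) :
    IsLocalization (Algebra.algebraMapSubmonoid R₁ (nonZeroDivisors R)) K' :=
  dominating_valuationSubring_isLocalization_general R K K' R₁
end

section
/- Let R be a valuation ring with fraction field K, let K'/K be a finite Galois extension with Galois group G, and let R' be the integral closure of R in K'. Then every maximal ideal of R' contracts to the maximal ideal of R, and the group G acts transitively on the set of maximal ideals of R'. -/
/-!
Contractions of maximal ideals along an integral extension are maximal, and a valuation ring is
local, so every maximal ideal of `R'` lies over the maximal ideal of `R`. Since `R` is integrally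
closed, the `G`-invariant elements of `R'` lie in `R`; hence for primes `P`, `Q` of `R'` over the
same prime of `R`, the norm of an element of `Q` avoiding every `σ P` would lie in `Q ∩ R = P ∩ R`,
contradicting prime avoidance. So `G` is transitive on them.
-/

theorem Ideal.comap_eq_maximalIdeal_of_isIntegral {R S : Type*} [CommRing R] [IsLocalRing R]
    [CommRing S] [Algebra R S] [Algebra.IsIntegral R S] (P : Ideal S) [P.IsMaximal] :
    P.comap (algebraMap R S) = IsLocalRing.maximalIdeal R :=
  IsLocalRing.eq_maximalIdeal (Ideal.isMaximal_comap_of_isIntegral_of_isMaximal P)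

theorem Ideal.exists_comap_galRestrict_eq_of_comap_eq (A K L B : Type*)
    [CommRing A] [IsDomain A] [IsIntegrallyClosed A] [Field K] [Algebra A K] [IsFractionRing A K]
    [Field L] [Algebra K L] [FiniteDimensional K L] [IsGalois K L] [Algebra A L]
    [IsScalarTower A K L] [CommRing B] [IsDomain B] [Algebra A B] [Algebra B L]
    [IsScalarTower A B L] [IsIntegralClosure B A L] (P Q : Ideal B) [P.IsPrime] [Q.IsPrime]
    (h : P.comap (algebraMap A B) = Q.comap (algebraMap A B)) :
    ∃ σ : L ≃ₐ[K] L, Q = P.comap (galRestrict A K L B σ) := by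
  have := IsIntegralClosure.isFractionRing_of_finite_extension A K L B
  have := Algebra.isInvariant_of_isGalois' A K L B
  have : Finite (B ≃ₐ[A] B) := Finite.of_equiv _ (galRestrict A K L B).toEquiv
  obtain ⟨g, rfl⟩ := Algebra.IsInvariant.exists_smul_of_under_eq A B (B ≃ₐ[A] B) P Q h
  refine ⟨(galRestrict A K L B).symm g.symm, ?_⟩
  rw [MulEquiv.apply_symm_apply, Ideal.pointwise_smul_def]
  exact Ideal.map_comap_of_equiv g.toRingEquiv

/-- Let `R` be a valuation ring with fraction field `K`, let `K'/K` be a finite Galois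
extension with Galois group `G = K' ≃ₐ[K] K'`, and let `R'` be the integral closure of `R`
in `K'`. Then every maximal ideal of `R'` contracts to the maximal ideal of `R`, and `G`
acts transitively on the set of maximal ideals of `R'`. -/
theorem maximalIdeals_of_integralClosure_valuationRing
    (R K K' : Type*) [CommRing R] [IsDomain R] [ValuationRing R]
    [Field K] [Algebra R K] [IsFractionRing R K]
    [Field K'] [Algebra K K'] [FiniteDimensional K K'] [IsGalois K K']
    [Algebra R K'] [IsScalarTower R K K'] :
    (∀ P : Ideal (integralClosure R K'), P.IsMaximal →
      P.comap (algebraMap R (integralClosure R K')) = IsLocalRing.maximalIdeal R) ∧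
    (∀ P Q : Ideal (integralClosure R K'), P.IsMaximal → Q.IsMaximal →
      ∃ σ : K' ≃ₐ[K] K',
        Q = P.comap (galRestrict R K K' (integralClosure R K') σ)) := by
  refine ⟨fun P _ ↦ P.comap_eq_maximalIdeal_of_isIntegral, fun P Q _ _ ↦ ?_⟩
  refine Ideal.exists_comap_galRestrict_eq_of_comap_eq R K K' _ P Q ?_
  rw [P.comap_eq_maximalIdeal_of_isIntegral, Q.comap_eq_maximalIdeal_of_isIntegral]
end

section
/- Let A be a local ring with maximal ideal m and residue field κ = A/m, let R be a valuation subring of κ with fraction field κ, and let O = p⁻¹(R) be the composition of A and R, where p : A → κ is the quotient map. Then m is a prime ideal of the ring O, and the inclusion O ⊆ A identifies A with the localization of O at the prime ideal m: every element of A can be written as b·c⁻¹ with b ∈ O and c ∈ O \ m. -/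
/-!
An element of `A` outside `O = p⁻¹(R)` has nonzero residue (as `0 ∈ R`), so it is a unit `a`,
and `p(a⁻¹) = p(a)⁻¹ ∈ R` because `R` is a valuation ring. Hence every element of `A` is either
in `O` or the inverse of an element of `O \ m`, which is exactly what makes `A` the localization
of `O` at `m ∩ O`.
-/

open IsLocalRing

theorem IsLocalRing.isLocalization_primeCompl_comap_maximalIdeal
    {A : Type*} [CommRing A] [IsLocalRing A] (O : Subring A)
    (h : ∀ a : A, a ∈ O ∨ ∃ b ∈ O, b ∉ maximalIdeal A ∧ a * b = 1) :
    IsLocalization ((maximalIdeal A).comap O.subtype).primeCompl A := by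
  rw [isLocalization_iff]
  refine ⟨fun c ↦ (mem_maximalIdeal _).not_left.mp c.2, fun a ↦ ?_,
    fun hxy ↦ ⟨1, by rw [Subtype.ext hxy]⟩⟩
  rcases h a with ha | ⟨b, hbO, hbm, hab⟩
  · exact ⟨(⟨a, ha⟩, 1), mul_one a⟩
  · exact ⟨(1, ⟨⟨b, hbO⟩, hbm⟩), hab.trans (map_one _).symm⟩

theorem ValuationSubring.mem_comap_residue_or_exists_mul_eq_one
    {A : Type*} [CommRing A] [IsLocalRing A] (R : ValuationSubring (ResidueField A)) (a : A) :
    a ∈ R.toSubring.comap (residue A) ∨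
      ∃ b ∈ R.toSubring.comap (residue A), b ∉ maximalIdeal A ∧ a * b = 1 := by
  by_cases haR : residue A a ∈ R
  · exact .inl haR
  have ha : IsUnit a := (residue_ne_zero_iff_isUnit a).mp fun h0 ↦ haR (h0 ▸ R.zero_mem)
  obtain ⟨u, rfl⟩ := ha
  refine .inr ⟨↑u⁻¹, ?_, (mem_maximalIdeal _).not_left.mpr u⁻¹.isUnit, u.mul_inv⟩
  have hinv := (R.mem_or_inv_mem (residue A u)).resolve_left haR
  simpa only [Subring.mem_comap, map_units_inv, ValuationSubring.mem_toSubring] using hinv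

/-- Let `A` be a local ring with maximal ideal `m` and residue field `κ = A/m`, let `R` be a
valuation subring of `κ` (with fraction field `κ`), and let `O = p⁻¹(R)` be the composition
of `A` and `R`, where `p : A → κ` is the quotient map. Then `m` is a prime ideal of `O`,
and the inclusion `O ⊆ A` identifies `A` with the localization of `O` at the prime ideal
`m`. -/
theorem semiValuationRing_localization_atPrime
    (A : Type*) [CommRing A] [IsLocalRing A]
    (R : ValuationSubring (IsLocalRing.ResidueField A))
    (O : Subring A) (hO : O = R.toSubring.comap (IsLocalRing.residue A)) :
    ∃ hP : ((IsLocalRing.maximalIdeal A).comap O.subtype).IsPrime,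
      IsLocalization
        (((IsLocalRing.maximalIdeal A).comap O.subtype).primeCompl (hp := hP)) A := by
  subst hO
  exact ⟨inferInstance, isLocalization_primeCompl_comap_maximalIdeal _
    R.mem_comap_residue_or_exists_mul_eq_one⟩
end

section
/- Let A be a local ring with maximal ideal m and residue field κ = A/m, let R be a valuation subring of κ with fraction field κ, and let O = p⁻¹(R) be the composition of A and R, where p : A → κ is the quotient map. Assume moreover that R has only finitely many prime ideals. Then there exists an element x ∈ O \ m such that the inclusion O ⊆ A identifies A with the localization of O away from x (i.e., A = O[1/x] inside A); in particular, the image of Spec A in Spec O is an open subset. -/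
/-!
A domain with finitely many primes has a nonzero element `x` lying in every nonzero prime
(the product of one nonzero element from each), so every nonzero `t` divides a power of `x`:
the fraction field is `D[1/x]`. For the valuation ring `R` this says that every `y` in the
residue field satisfies `y * x̄ ^ n ∈ R` for some `n` (either `y ∈ R`, or `y⁻¹ ∈ R` divides a
power of `x̄`). Lifting `x̄` to a unit `x ∈ O`, every `z ∈ A` has `z * x ^ n ∈ O`, which is
exactly `A = O[1/x]`.
-/

open IsLocalRing

theorem exists_ne_zero_forall_mem_of_finite_primeSpectrum (D : Type*) [CommRing D] [IsDomain D]
    [Finite (PrimeSpectrum D)] :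
    ∃ x : D, x ≠ 0 ∧ ∀ p : PrimeSpectrum D, p.asIdeal ≠ ⊥ → x ∈ p.asIdeal := by
  have := Fintype.ofFinite (PrimeSpectrum D)
  choose f hf using fun p : {p : PrimeSpectrum D // p.asIdeal ≠ ⊥} ↦
    Submodule.exists_mem_ne_zero_of_ne_bot p.2
  refine ⟨∏ p, f p, Finset.prod_ne_zero_iff.mpr fun p _ ↦ (hf p).2, fun p hp ↦ ?_⟩
  exact Ideal.prod_mem _ (Finset.mem_univ ⟨p, hp⟩) (hf ⟨p, hp⟩).1

theorem exists_ne_zero_forall_dvd_pow_of_finite_primeSpectrum (D : Type*) [CommRing D]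
    [IsDomain D] [Finite (PrimeSpectrum D)] :
    ∃ x : D, x ≠ 0 ∧ ∀ t : D, t ≠ 0 → ∃ n : ℕ, t ∣ x ^ n := by
  obtain ⟨x, hx0, hx⟩ := exists_ne_zero_forall_mem_of_finite_primeSpectrum D
  refine ⟨x, hx0, fun t ht ↦ ?_⟩
  have hrad : x ∈ (Ideal.span {t}).radical := by
    rw [Ideal.radical_eq_sInf, Submodule.mem_sInf]
    rintro J ⟨htJ, hJ⟩
    exact hx ⟨J, hJ⟩ fun hJ0 ↦ ht (Ideal.span_singleton_eq_bot.mp (le_bot_iff.mp (hJ0 ▸ htJ)))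
  obtain ⟨n, hn⟩ := hrad
  exact ⟨n, Ideal.mem_span_singleton.mp hn⟩

theorem ValuationSubring.exists_mul_pow_mem_of_forall_dvd_pow {K : Type*} [Field K]
    (R : ValuationSubring K) {x : R} (hx : ∀ t : R, t ≠ 0 → ∃ n : ℕ, t ∣ x ^ n) (y : K) :
    ∃ n : ℕ, y * (x : K) ^ n ∈ R := by
  by_cases hy : y = 0
  · exact ⟨0, by simp [hy]⟩
  rcases R.mem_or_inv_mem y with hyR | hyR
  · exact ⟨0, by simpa using hyR⟩
  obtain ⟨n, r, hr⟩ := hx ⟨y⁻¹, hyR⟩ (by simpa [← Subtype.coe_inj] using hy)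
  have hr : (x : K) ^ n = y⁻¹ * r := by simpa using congrArg Subtype.val hr
  exact ⟨n, by rw [hr, ← mul_assoc, mul_inv_cancel₀ hy, one_mul]; exact r.2⟩

theorem Subring.isLocalization_away_of_forall_mul_pow_mem {A : Type*} [CommRing A]
    {O : Subring A} {x : O} (hx : IsUnit (x : A)) (h : ∀ z : A, ∃ n : ℕ, z * x ^ n ∈ O) :
    IsLocalization.Away x A := by
  refine (isLocalization_iff _ _).mpr ⟨?_, fun z ↦ ?_, fun {a b} hab ↦ ⟨1, ?_⟩⟩
  · rintro ⟨_, n, rfl⟩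
    exact hx.pow n
  · obtain ⟨n, hn⟩ := h z
    exact ⟨⟨⟨_, hn⟩, ⟨x ^ n, n, rfl⟩⟩, rfl⟩
  · rw [Subtype.ext (hab : (a : A) = b)]

/-- Let `A` be a local ring with maximal ideal `m` and residue field `κ = A/m`, let `R` be a
valuation subring of `κ` with only finitely many prime ideals, and let `O = p⁻¹(R)` be the
composition of `A` and `R`, where `p : A → κ` is the quotient map. Then there exists
`x ∈ O \ m` such that the inclusion `O ⊆ A` identifies `A` with the localization of `O`
away from `x`. -/
theorem semiValuationRing_finiteRank_localization_away
    (A : Type*) [CommRing A] [IsLocalRing A]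
    (R : ValuationSubring (IsLocalRing.ResidueField A))
    [Finite (PrimeSpectrum R)]
    (O : Subring A) (hO : O = R.toSubring.comap (IsLocalRing.residue A)) :
    ∃ x : O, (x : A) ∉ IsLocalRing.maximalIdeal A ∧ IsLocalization.Away x A := by
  subst hO
  obtain ⟨x₀, hx₀, hdvd⟩ := exists_ne_zero_forall_dvd_pow_of_finite_primeSpectrum R
  obtain ⟨x, hx⟩ := residue_surjective (x₀ : ResidueField A)
  have hxm : x ∉ maximalIdeal A := by
    rw [← residue_eq_zero_iff, hx]
    exact_mod_cast hx₀
  refine ⟨⟨x, by simp [hx]⟩, hxm, ?_⟩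
  refine Subring.isLocalization_away_of_forall_mul_pow_mem (notMem_maximalIdeal.mp hxm) fun z ↦ ?_
  obtain ⟨n, hn⟩ := R.exists_mul_pow_mem_of_forall_dvd_pow hdvd (residue A z)
  exact ⟨n, by simpa [hx] using hn⟩
end

section
/- Let A be a local ring with maximal ideal m and residue field K = A/m, and let K'/K be a finite separable field extension. Then there exists an A-algebra A' that is finite étale over A, such that A' is a local ring and A'/mA' is isomorphic to K' as a K-algebra. -/
/-!
By the primitive element theorem `K' ≅ K[T]/(P̄)` with `P̄` the minimal polynomial of a generator
`α`. Lift `P̄` to a monic `P ∈ A[T]` and take `A' = A[T]/(P)`, a finite free `A`-module with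
`A'/mA' ≅ K[T]/(P̄) ≅ K'`. Since `mA'` is then maximal and `A'` is integral over `A`, every maximal
ideal of `A'` contracts to `m` and hence contains `mA'`, so `A'` is local. The residue of `P'(T)`
is `P̄'(α) ≠ 0` by separability, so `P'(T)` is a unit of `A'`, which makes `A'` standard étale.
-/

universe u

open Polynomial IsLocalRing

namespace AdjoinRoot

variable {R : Type*} [CommRing R]

/-- `(f, f')` is a standard étale pair, and inverting the unit `f'` does not change `R[X]/(f)`. -/
theorem etale_of_isUnit_derivative {f : R[X]} (hf : f.Monic)
    (h : IsUnit (mk f (derivative f))) : Algebra.Etale R (AdjoinRoot f) :=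
  let P : StandardEtalePair R := ⟨f, hf, derivative f, 1, 0, 1, by simp⟩
  .of_equiv <| P.equivAwayAdjoinRoot.trans <| AlgEquiv.restrictScalars R <|
    (IsLocalization.atUnits _ (.powers _) (Submonoid.powers_le.mpr h)).symm

variable [IsLocalRing R] {S : Type*} [CommRing S] [Algebra (ResidueField R) S]

noncomputable def quotMapMaximalIdealEquiv (pb : PowerBasis (ResidueField R) S) {f : R[X]}
    (hf : f.map (residue R) = minpoly (ResidueField R) pb.gen) :
    AdjoinRoot f ⧸ (maximalIdeal R).map (algebraMap R (AdjoinRoot f)) ≃+* S :=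
  (quotEquivQuotMap f _).toRingEquiv.trans
    (equiv' (f.map (residue R)) pb (by rw [← hf, aeval_eq, mk_self])
      (hf ▸ minpoly.aeval _ _)).toRingEquiv

theorem quotMapMaximalIdealEquiv_mk (pb : PowerBasis (ResidueField R) S) {f : R[X]}
    (hf : f.map (residue R) = minpoly (ResidueField R) pb.gen) (g : R[X]) :
    quotMapMaximalIdealEquiv pb hf (Ideal.Quotient.mk _ (mk f g)) =
      aeval pb.gen (g.map (residue R)) := by
  have hroot : aeval pb.gen (f.map (residue R)) = 0 := hf ▸ minpoly.aeval _ _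
  exact (congrArg (equiv' (f.map (residue R)) pb (by rw [← hf, aeval_eq, mk_self]) hroot)
    (quotEquivQuotMap_apply_mk f g _)).trans (lift_mk hroot _)

end AdjoinRoot

theorem IsLocalRing.of_isMaximal_map_maximalIdeal {A B : Type*} [CommRing A] [IsLocalRing A]
    [CommRing B] [Algebra A B] [Algebra.IsIntegral A B]
    (h : ((maximalIdeal A).map (algebraMap A B)).IsMaximal) : IsLocalRing B :=
  .of_unique_max_ideal ⟨_, h, fun J hJ ↦ (h.eq_of_le hJ.ne_top <| Ideal.map_le_of_le_comap
    (eq_maximalIdeal (Ideal.isMaximal_comap_of_isIntegral_of_isMaximal J)).ge).symm⟩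

/-- Let `A` be a local ring with maximal ideal `m` and residue field `K = A/m`, and let
`K'/K` be a finite separable field extension. Then there exists an `A`-algebra `A'` that is
finite étale over `A`, such that `A'` is a local ring and `A'/mA'` is isomorphic to `K'`
as a `K`-algebra. -/
theorem exists_finite_etale_local_lift_of_finite_separable
    (A : Type u) [CommRing A] [IsLocalRing A]
    (K' : Type u) [Field K'] [Algebra (IsLocalRing.ResidueField A) K']
    [FiniteDimensional (IsLocalRing.ResidueField A) K']
    [Algebra.IsSeparable (IsLocalRing.ResidueField A) K'] :
    ∃ (A' : Type u) (_ : CommRing A') (_ : Algebra A A'),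
      Module.Finite A A' ∧ Algebra.Etale A A' ∧ IsLocalRing A' ∧
      ∃ e : (A' ⧸ (IsLocalRing.maximalIdeal A).map (algebraMap A A')) ≃+* K',
        ∀ a : A,
          e (Ideal.Quotient.mk ((IsLocalRing.maximalIdeal A).map (algebraMap A A'))
              (algebraMap A A' a)) =
            algebraMap (IsLocalRing.ResidueField A) K' (IsLocalRing.residue A a) := by
  let pb := Field.powerBasisOfFiniteOfSeparable (ResidueField A) K'
  obtain ⟨P, hPmap, -, hPmonic⟩ := lifts_and_degree_eq_and_monic
    (mem_lifts_of_surjective residue_surjective _) (minpoly.monic pb.isIntegral_gen)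
  let e := AdjoinRoot.quotMapMaximalIdealEquiv pb hPmap
  have hmax : ((maximalIdeal A).map (algebraMap A (AdjoinRoot P))).IsMaximal :=
    Ideal.Quotient.maximal_of_isField _ (e.toMulEquiv.isField (Field.toIsField K'))
  have hfinite := hPmonic.finite_adjoinRoot
  have hunit : IsUnit (AdjoinRoot.mk P (derivative P)) := by
    have := IsLocalRing.of_isMaximal_map_maximalIdeal hmax
    rw [← notMem_maximalIdeal, ← eq_maximalIdeal hmax, ← Ideal.Quotient.eq_zero_iff_mem,
      ← e.map_eq_zero_iff, AdjoinRoot.quotMapMaximalIdealEquiv_mk, ← derivative_map, hPmap]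
    exact (Algebra.IsSeparable.isSeparable _ pb.gen).aeval_derivative_ne_zero (minpoly.aeval _ _)
  refine ⟨AdjoinRoot P, _, _, hfinite, AdjoinRoot.etale_of_isUnit_derivative hPmonic hunit,
    .of_isMaximal_map_maximalIdeal hmax, e, fun a ↦ ?_⟩
  simpa using AdjoinRoot.quotMapMaximalIdealEquiv_mk pb hPmap (C a)
end

section
/- Let K be a field equipped with a rank-1 valuation v : K → ℝ≥0 (a multiplicative valuation with values in the nonnegative real numbers), and suppose K is complete with respect to the topology induced by v. Then the valuation ring O_K = { x ∈ K : v(x) ≤ 1 } is a henselian local ring. -/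
/-!
Run Newton's iteration `xₙ₊₁ = xₙ - f(xₙ) / f'(xₙ)` from `a₀` in `O_K`. Over any local ring the
derivative stays a unit along the orbit, `f(a₀) ^ 2 ^ n` divides `f(xₙ)`, and `f(xₙ)` divides
`xₙ₊₁ - xₙ`. As `v(f(a₀)) < 1`, the differences `xₙ₊₁ - xₙ` tend to `0`, so `(xₙ)` is Cauchy in the
non-archimedean complete field `K`. Its limit lies in the closed subring `O_K`, is a root of `f` by
continuity, and is congruent to `a₀` because `{x | v x < 1}` is closed.
-/

open Polynomial Filter Topology IsLocalRing

namespace Polynomial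

variable {R : Type*} [CommRing R] {f : R[X]} {x : R}

theorem eval_dvd_newtonMap_sub_self : f.eval x ∣ f.newtonMap x - x := by
  rw [newtonMap_apply, sub_sub_cancel_left, dvd_neg]
  exact dvd_mul_left _ _

theorem eval_sq_dvd_eval_newtonMap (h : IsUnit (f.derivative.eval x)) :
    f.eval x ^ 2 ∣ f.eval (f.newtonMap x) := by
  obtain ⟨c, hc⟩ := f.binomExpansion x (f.newtonMap x - x)
  have hcancel := Ring.mul_inverse_cancel _ h
  simp only [add_sub_cancel, newtonMap_apply, coe_aeval_eq_eval] at hc ⊢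
  refine ⟨c * Ring.inverse (f.derivative.eval x) ^ 2, ?_⟩
  rw [hc]
  linear_combination (-f.eval x) * hcancel

theorem eval_newtonMap_mem {I : Ideal R} (h₁ : f.eval x ∈ I)
    (h₂ : IsUnit (f.derivative.eval x)) : f.eval (f.newtonMap x) ∈ I :=
  I.mem_of_dvd (eval_sq_dvd_eval_newtonMap h₂) (I.pow_mem_of_mem h₁ 2 two_pos)

variable [IsLocalRing R]

theorem isUnit_eval_derivative_newtonMap (h₁ : f.eval x ∈ maximalIdeal R)
    (h₂ : IsUnit (f.derivative.eval x)) : IsUnit (f.derivative.eval (f.newtonMap x)) := by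
  have hsub : f.derivative.eval (f.newtonMap x) - f.derivative.eval x ∈ maximalIdeal R :=
    Ideal.mem_of_dvd _ (eval_dvd_newtonMap_sub_self.trans (sub_dvd_eval_sub _ _ _)) h₁
  rw [← notMem_maximalIdeal] at h₂ ⊢
  exact fun h => h₂ (by simpa using Ideal.sub_mem _ h hsub)

theorem pow_two_pow_dvd_eval_iterate_newtonMap (h₁ : f.eval x ∈ maximalIdeal R)
    (h₂ : IsUnit (f.derivative.eval x)) (n : ℕ) :
    f.eval x ^ 2 ^ n ∣ f.eval (f.newtonMap^[n] x) := by
  induction n generalizing x with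
  | zero => simp
  | succ n ih =>
    rw [Function.iterate_succ_apply, pow_succ', pow_mul]
    exact (pow_dvd_pow_of_dvd (eval_sq_dvd_eval_newtonMap h₂) _).trans
      (ih (eval_newtonMap_mem h₁ h₂) (isUnit_eval_derivative_newtonMap h₁ h₂))

theorem iterate_newtonMap_sub_mem_maximalIdeal (h₁ : f.eval x ∈ maximalIdeal R)
    (h₂ : IsUnit (f.derivative.eval x)) (n : ℕ) : f.newtonMap^[n] x - x ∈ maximalIdeal R := by
  induction n generalizing x with
  | zero => simp
  | succ n ih =>
    rw [Function.iterate_succ_apply, ← sub_add_sub_cancel _ (f.newtonMap x)]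
    exact Ideal.add_mem _
      (ih (eval_newtonMap_mem h₁ h₂) (isUnit_eval_derivative_newtonMap h₁ h₂))
      (Ideal.mem_of_dvd _ eval_dvd_newtonMap_sub_self h₁)

end Polynomial

namespace Valuation

variable {K : Type*} [Field K]

theorem mem_maximalIdeal_valuationSubring_iff {Γ₀ : Type*} [LinearOrderedCommGroupWithZero Γ₀]
    (v : Valuation K Γ₀) {x : v.valuationSubring} :
    x ∈ maximalIdeal v.valuationSubring ↔ v x < 1 := by
  rw [← not_iff_not, notMem_maximalIdeal,
    (valuationSubring.integers v).isUnit_iff_valuation_eq_one, not_lt]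
  exact ⟨ge_of_eq, x.2.antisymm⟩

section NNReal

variable (v : Valuation K NNReal)

local notation "𝒪" => Valuation.valuationSubring v

theorem tendsto_eval_iterate_newtonMap {f : Polynomial 𝒪} {a : 𝒪}
    (h₁ : f.eval a ∈ maximalIdeal 𝒪) (h₂ : IsUnit (f.derivative.eval a)) :
    Tendsto (fun n => v ((f.eval (f.newtonMap^[n] a) : 𝒪) : K)) atTop (𝓝 0) := by
  have hbound (n : ℕ) :
      v ((f.eval (f.newtonMap^[n] a) : 𝒪) : K) ≤ v ((f.eval a : 𝒪) : K) ^ 2 ^ n := by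
    simpa using (valuationSubring.integers v).le_of_dvd
      (pow_two_pow_dvd_eval_iterate_newtonMap h₁ h₂ n)
  have hpow : Tendsto (fun n : ℕ => v ((f.eval a : 𝒪) : K) ^ 2 ^ n) atTop (𝓝 0) :=
    (NNReal.tendsto_pow_atTop_nhds_zero_of_lt_one
      ((mem_maximalIdeal_valuationSubring_iff v).mp h₁)).comp
      (tendsto_pow_atTop_atTop_of_one_lt one_lt_two)
  exact tendsto_of_tendsto_of_tendsto_of_le_of_le tendsto_const_nhds hpow (fun _ => zero_le) hbound

theorem tendsto_iterate_newtonMap_sub {f : Polynomial 𝒪} {a : 𝒪}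
    (h₁ : f.eval a ∈ maximalIdeal 𝒪) (h₂ : IsUnit (f.derivative.eval a)) :
    Tendsto (fun n => v ((f.newtonMap^[n + 1] a : 𝒪) - (f.newtonMap^[n] a : 𝒪) : K)) atTop
      (𝓝 0) := by
  refine tendsto_of_tendsto_of_tendsto_of_le_of_le tendsto_const_nhds
    (v.tendsto_eval_iterate_newtonMap h₁ h₂) (fun _ => zero_le) fun n => ?_
  simpa [Function.iterate_succ_apply'] using
    (valuationSubring.integers v).le_of_dvd eval_dvd_newtonMap_sub_self

end NNReal

end Valuation

namespace Valued

variable {R : Type*} [Ring R]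

section

variable {Γ₀ : Type*} [LinearOrderedCommGroupWithZero Γ₀] [Valued R Γ₀]

instance nonarchimedeanAddGroup : NonarchimedeanAddGroup R where
  is_nonarchimedean U hU := by
    obtain ⟨γ, hγ⟩ := mem_nhds_zero.mp hU
    exact ⟨⟨Valuation.ltAddSubgroup _ (Units.mk0 _ γ.ne_zero), isOpen_ball R γ.1⟩, hγ⟩

theorem isClosed_setOf_v_lt_one : IsClosed {x : R | v x < 1} := by
  simpa only [Valuation.restrict_lt_iff_lt_embedding, map_one] using isClosed_ball R 1

end

variable [Valued R NNReal]

theorem tendsto_zero_of_tendsto_v {ι : Type*} {l : Filter ι} {x : ι → R}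
    (h : Tendsto (fun i => v (x i)) l (𝓝 0)) : Tendsto x l (𝓝 0) := by
  refine (hasBasis_nhds_zero R NNReal).tendsto_right_iff.mpr fun γ _ => ?_
  have hγ : 0 < MonoidWithZeroHom.ValueGroup₀.embedding γ.1 :=
    pos_iff_ne_zero.mpr ((_root_.map_ne_zero _).mpr γ.ne_zero)
  filter_upwards [h.eventually (gt_mem_nhds hγ)] with i hi
  exact (Valuation.restrict_lt_iff_lt_embedding _).mpr hi

theorem cauchySeq_of_tendsto_v_sub {x : ℕ → R}
    (h : Tendsto (fun n => v (x (n + 1) - x n)) atTop (𝓝 0)) : CauchySeq x :=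
  NonarchimedeanAddGroup.cauchySeq_of_tendsto_sub_nhds_zero (tendsto_zero_of_tendsto_v h)

section Field

variable {K : Type*} [Field K] [Valued K NNReal] {ι : Type*} {l : Filter ι} [l.NeBot]

local notation "𝒪" => Valuation.valuationSubring (Valued.v (R := K))

theorem isRoot_of_tendsto {f : Polynomial 𝒪} {x : ι → 𝒪} {α : 𝒪}
    (hα : Tendsto (fun i => (x i : K)) l (𝓝 α))
    (hf : Tendsto (fun i => v ((f.eval (x i) : 𝒪) : K)) l (𝓝 0)) : f.IsRoot α := by
  have hcoe (y : 𝒪) : ((f.eval y : 𝒪) : K) = (f.map (algebraMap 𝒪 K)).eval (y : K) := by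
    rw [eval_map]
    exact (eval₂_hom (algebraMap 𝒪 K) y).symm
  have hlim := ((f.map (algebraMap 𝒪 K)).continuous.tendsto _).comp hα
  have hzero := tendsto_zero_of_tendsto_v hf
  simp only [Function.comp_def, ← hcoe] at hlim hzero
  exact Subtype.ext (tendsto_nhds_unique hlim hzero)

theorem sub_mem_maximalIdeal_of_tendsto {x : ι → 𝒪} {α a : 𝒪}
    (hα : Tendsto (fun i => (x i : K)) l (𝓝 α))
    (hx : ∀ i, x i - a ∈ IsLocalRing.maximalIdeal 𝒪) : α - a ∈ IsLocalRing.maximalIdeal 𝒪 := by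
  simp only [Valuation.mem_maximalIdeal_valuationSubring_iff] at hx ⊢
  exact isClosed_setOf_v_lt_one.mem_of_tendsto (hα.sub_const _) (.of_forall hx)

end Field

end Valued

/-- Let `K` be a field equipped with a rank-1 valuation `v : K → ℝ≥0` and complete for the
induced topology. Then the valuation ring `O_K = {x : K | v x ≤ 1}` is a henselian local
ring. -/
theorem henselian_of_complete_rank_one_valued
    (K : Type*) [Field K] [Valued K NNReal] [CompleteSpace K] :
    HenselianLocalRing (Valued.v (R := K)).valuationSubring := by
  refine ⟨fun f _ a₀ h₁ h₂ => ?_⟩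
  have hstep := (Valued.v (R := K)).tendsto_iterate_newtonMap_sub h₁ h₂
  obtain ⟨α, hα⟩ := cauchySeq_tendsto_of_complete
    (Valued.cauchySeq_of_tendsto_v_sub (x := fun n => (↑(f.newtonMap^[n] a₀) : K)) hstep)
  lift α to (Valued.v (R := K)).valuationSubring using
    (Valued.isClosed_valuationSubring K).mem_of_tendsto hα (.of_forall fun _ => Subtype.prop _)
  have hroot := (Valued.v (R := K)).tendsto_eval_iterate_newtonMap h₁ h₂
  exact ⟨α, Valued.isRoot_of_tendsto hα hroot,
    Valued.sub_mem_maximalIdeal_of_tendsto hα (iterate_newtonMap_sub_mem_maximalIdeal h₁ h₂)⟩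
end

section
/- Let M be a cancellative (integral) commutative monoid and a ∈ M. Then the semi-stable model monoid F_a(M) = M[x,y]/(xy = a), i.e., the quotient of M × ℕ² by the monoid congruence generated by the single relation x·y ~ (a,(0,0)) where x = (1,(1,0)) and y = (1,(0,1)), is again cancellative. -/
/-!
Sending `m ∈ M` to `(m, 0)`, `x` to `(1, 1)` and `y` to `(a, -1)` defines a monoid map
`M × ℕ² → M × ℤ` that identifies `xy` with `a`. When `M` is cancellative its kernel is exactly
the semi-stable congruence: if `(m, xⁱyʲ)` and `(n, xᵏyˡ)` have the same image and `j ≤ l`, then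
cancelling `aʲ` gives `m = n aᵈ` and `(k, l) = (i + d, j + d)` with `d = l - j`, and these two
elements are related through `(xy)ᵈ ~ aᵈ`. Hence `F_a(M)` embeds into the cancellative monoid
`M × ℤ`.
-/

def semistableCon (M : Type*) [CommMonoid M] (a : M) :
    Con (M × Multiplicative (ℕ × ℕ)) :=
  conGen (fun p q =>
    p = ((1 : M), Multiplicative.ofAdd ((1 : ℕ), (0 : ℕ))) *
        ((1 : M), Multiplicative.ofAdd ((0 : ℕ), (1 : ℕ))) ∧
    q = (a, 1))

namespace semistableCon

variable {M : Type*} [CommMonoid M] (a : M)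

def toProd : M × Multiplicative (ℕ × ℕ) →* M × Multiplicative ℤ where
  toFun p := (p.1 * a ^ p.2.toAdd.2, .ofAdd ((p.2.toAdd.1 : ℤ) - p.2.toAdd.2))
  map_one' := by simp
  map_mul' p q := by
    ext
    · simp only [Prod.fst_mul, Prod.snd_mul, toAdd_mul, Prod.snd_add, pow_add]; ac_rfl
    · simp only [Prod.snd_mul, toAdd_mul, Prod.fst_add, Prod.snd_add, Nat.cast_add, ← ofAdd_add]
      rw [sub_add_sub_comm]

theorem x_mul_y : ((1 : M), Multiplicative.ofAdd ((1 : ℕ), (0 : ℕ))) *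
    ((1 : M), Multiplicative.ofAdd ((0 : ℕ), (1 : ℕ))) = (1, .ofAdd (1, 1)) := by
  rw [Prod.mk_mul_mk, one_mul]
  rfl

theorem le_ker_toProd : semistableCon M a ≤ Con.ker (toProd a) := by
  refine Con.conGen_le.2 ?_
  rintro _ _ ⟨rfl, rfl⟩
  simp [Con.ker_rel, toProd]

theorem rel_mul_ofAdd_diag (m : M) (w : Multiplicative (ℕ × ℕ)) (d : ℕ) :
    semistableCon M a (m, w * .ofAdd (d, d)) (m * a ^ d, w) := by
  have hxy : semistableCon M a (1, .ofAdd (1, 1)) (a, 1) :=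
    Con.le_conGen _ _ ⟨x_mul_y.symm, rfl⟩
  have hpow : (Multiplicative.ofAdd ((1 : ℕ), (1 : ℕ))) ^ d = .ofAdd (d, d) := by
    rw [← ofAdd_nsmul, Prod.smul_mk, smul_eq_mul, mul_one]
  have h : semistableCon M a ((m, w) * (1, .ofAdd (1, 1)) ^ d) ((m, w) * (a, 1) ^ d) :=
    ((semistableCon M a).refl (m, w)).mul ((semistableCon M a).pow d hxy)
  convert h using 1 <;> simp only [Prod.pow_mk, one_pow, hpow, Prod.mk_mul_mk, mul_one]

theorem ker_toProd_le [IsCancelMul M] : Con.ker (toProd a) ≤ semistableCon M a := by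
  rintro ⟨m, w⟩ ⟨n, v⟩ h
  simp only [Con.ker_rel, toProd, MonoidHom.coe_mk, OneHom.coe_mk, Prod.mk.injEq,
    EmbeddingLike.apply_eq_iff_eq] at h
  obtain ⟨hM, hZ⟩ := h
  wlog hle : w.toAdd.2 ≤ v.toAdd.2 generalizing m n w v
  · exact (semistableCon M a).symm (this n v m w hM.symm hZ.symm (le_of_not_ge hle))
  obtain ⟨d, hd⟩ := Nat.exists_eq_add_of_le hle
  have hm : m = n * a ^ d := mul_right_cancel (b := a ^ w.toAdd.2) <| by
    rw [hM, hd, pow_add, mul_assoc, mul_comm (a ^ _)]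
  have hv : v = w * .ofAdd (d, d) := by
    apply Multiplicative.toAdd.injective
    ext <;> simp only [toAdd_mul, toAdd_ofAdd, Prod.fst_add, Prod.snd_add] <;> omega
  rw [hm, hv]
  exact (semistableCon M a).symm (rel_mul_ofAdd_diag a n w d)

theorem eq_ker_toProd [IsCancelMul M] : semistableCon M a = Con.ker (toProd a) :=
  le_antisymm (le_ker_toProd a) (ker_toProd_le a)

end semistableCon

/-- If `M` is a cancellative (integral) commutative monoid and `a ∈ M`, then the
semi-stable model monoid `F_a(M) = M[x,y]/(xy = a)` is again cancellative. -/
theorem semistable_monoid_cancellative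
    (M : Type*) [CommMonoid M] [IsCancelMul M] (a : M) :
    IsCancelMul (semistableCon M a).Quotient := by
  rw [semistableCon.eq_ker_toProd]
  exact (Con.kerLift_injective _).isCancelMul _ (map_mul _)
end
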